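/- (Asymptotic regularity) Let {f_k} be generated by SQRT-ISTA with 0 < τ < 2/‖A‖², σ_k > 0 for all k, and suppose σ_k ≤ σ_max for all k. Then Σ_{k=0}^∞ ‖f_{k+1} - f_k‖² < ∞; in particular ‖f_{k+1} - f_k‖ → 0 and |σ_{k+1} - σ_k| → 0 as k → ∞. -/

import Mathlib

/-!
Soft thresholding at level `t` is the proximal map of `(t/2)‖·‖₁`, so its three-point inequality,
applied to the gradient step `q + τ A*(g - A q)` and combined with the polarization identity for
`⟪p - q, A*(g - A q)⟫` and AM-GM, yields the descent inequality
`Φ_μ(f_{k+1}) + (2 - τ‖A‖²)/(2τσ_k) ‖f_{k+1} - f_k‖² ≤ Φ_μ(f_k)`.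
Since `σ_k ≤ σ_max`, the coefficient is bounded below by a positive constant, and the squared steps
telescope against the nonnegative objective. The residual norms `σ_k` are `‖A‖`-Lipschitz in `f_k`.
-/
open scoped RealInnerProductSpace BigOperators
open Filter Topology

noncomputable def softTh (t x : ℝ) : ℝ :=
  if x ≤ -(t/2) then x + t/2 else if |x| < t/2 then 0 else x - t/2

noncomputable def softThVec {d : ℕ} (t : ℝ) (x : EuclideanSpace ℝ (Fin d)) :
    EuclideanSpace ℝ (Fin d) := WithLp.toLp 2 (fun i => softTh t (x i))

noncomputable def l1 {d : ℕ} (f : EuclideanSpace ℝ (Fin d)) : ℝ := ∑ i, |f i|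

lemma softTh_three_point {t : ℝ} (ht : 0 ≤ t) (x z : ℝ) :
    (softTh t x - x) ^ 2 / 2 + t / 2 * |softTh t x| + (z - softTh t x) ^ 2 / 2 ≤
      (z - x) ^ 2 / 2 + t / 2 * |z| := by
  unfold softTh
  split_ifs with hneg hsmall
  · rw [abs_of_nonpos (by linarith)]
    rcases abs_cases z with ⟨_, _⟩ | ⟨_, _⟩ <;> nlinarith
  · rw [abs_zero]
    rcases abs_cases x with ⟨_, _⟩ | ⟨_, _⟩ <;>
      rcases abs_cases z with ⟨_, _⟩ | ⟨_, _⟩ <;> nlinarith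
  · have hx : t / 2 ≤ x := by
      rcases abs_cases x with ⟨_, _⟩ | ⟨_, _⟩ <;> linarith [not_le.mp hneg, not_lt.mp hsmall]
    rw [abs_of_nonneg (by linarith)]
    rcases abs_cases z with ⟨_, _⟩ | ⟨_, _⟩ <;> nlinarith

lemma softThVec_three_point {d : ℕ} {t : ℝ} (ht : 0 ≤ t) (x z : EuclideanSpace ℝ (Fin d)) :
    ‖softThVec t x - x‖ ^ 2 / 2 + t / 2 * l1 (softThVec t x) + ‖z - softThVec t x‖ ^ 2 / 2 ≤
      ‖z - x‖ ^ 2 / 2 + t / 2 * l1 z := by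
  simp only [EuclideanSpace.real_norm_sq_eq, l1, Finset.mul_sum, Finset.sum_div,
    ← Finset.sum_add_distrib]
  exact Finset.sum_le_sum fun i _ => by simpa [softThVec] using softTh_three_point ht (x i) (z i)

lemma l1_nonneg {d : ℕ} (f : EuclideanSpace ℝ (Fin d)) : 0 ≤ l1 f :=
  Finset.sum_nonneg fun i _ => abs_nonneg (f i)

lemma inner_sub_adjoint_residual {E F : Type*} [NormedAddCommGroup E] [InnerProductSpace ℝ E]
    [CompleteSpace E] [NormedAddCommGroup F] [InnerProductSpace ℝ F] [CompleteSpace F]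
    (A : E →L[ℝ] F) (g : F) (p q : E) :
    ⟪p - q, ContinuousLinearMap.adjoint A (g - A q)⟫ =
      (‖A q - g‖ ^ 2 + ‖A (p - q)‖ ^ 2 - ‖A p - g‖ ^ 2) / 2 := by
  have hdiff : A (p - q) = (A p - g) - (A q - g) := by rw [map_sub]; abel
  have hres : g - A q = -(A q - g) := (neg_sub _ _).symm
  rw [ContinuousLinearMap.adjoint_inner_right, hdiff, norm_sub_sq_real (A p - g), hres,
    inner_neg_right, inner_sub_left, real_inner_self_eq_norm_sq, real_inner_comm]
  ring

lemma abs_norm_residual_sub_le {E F : Type*} [SeminormedAddCommGroup E] [SeminormedAddCommGroup F]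
    [NormedSpace ℝ E] [NormedSpace ℝ F] (A : E →L[ℝ] F) (g : F) (p q : E) :
    |‖A p - g‖ - ‖A q - g‖| ≤ ‖A‖ * ‖p - q‖ :=
  calc |‖A p - g‖ - ‖A q - g‖| ≤ ‖(A p - g) - (A q - g)‖ := abs_norm_sub_norm_le _ _
    _ = ‖A (p - q)‖ := by rw [sub_sub_sub_cancel_right, map_sub]
    _ ≤ ‖A‖ * ‖p - q‖ := A.le_opNorm _

lemma summable_of_le_sub_succ {a u : ℕ → ℝ} (ha : ∀ k, 0 ≤ a k) (hu : ∀ k, 0 ≤ u k)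
    (hdec : ∀ k, a k ≤ u k - u (k + 1)) : Summable a :=
  summable_of_sum_range_le ha fun n =>
    calc ∑ k ∈ Finset.range n, a k ≤ ∑ k ∈ Finset.range n, (u k - u (k + 1)) :=
          Finset.sum_le_sum fun k _ => hdec k
      _ = u 0 - u n := Finset.sum_range_sub' u n
      _ ≤ u 0 := sub_le_self _ (hu n)

lemma tendsto_norm_zero_of_summable_norm_sq {E : Type*} [SeminormedAddCommGroup E] {v : ℕ → E}
    (h : Summable fun k => ‖v k‖ ^ 2) : Tendsto (fun k => ‖v k‖) atTop (𝓝 0) := by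
  simpa [Real.sqrt_sq (norm_nonneg _)] using h.tendsto_atTop_zero.sqrt

section

variable {d : ℕ} {F : Type*} [NormedAddCommGroup F] [InnerProductSpace ℝ F]

noncomputable def sqrtLassoObjective (A : EuclideanSpace ℝ (Fin d) →L[ℝ] F) (g : F) (μ : ℝ)
    (f : EuclideanSpace ℝ (Fin d)) : ℝ :=
  ‖A f - g‖ + μ * l1 f

noncomputable def sqrtIstaStep [CompleteSpace F] (τ μ : ℝ)
    (A : EuclideanSpace ℝ (Fin d) →L[ℝ] F) (g : F) (f : EuclideanSpace ℝ (Fin d)) :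
    EuclideanSpace ℝ (Fin d) :=
  softThVec (2 * τ * μ * ‖A f - g‖) (f + τ • ContinuousLinearMap.adjoint A (g - A f))

lemma sqrtLassoObjective_nonneg {μ : ℝ} (hμ : 0 ≤ μ) (A : EuclideanSpace ℝ (Fin d) →L[ℝ] F)
    (g : F) (f : EuclideanSpace ℝ (Fin d)) : 0 ≤ sqrtLassoObjective A g μ f :=
  add_nonneg (norm_nonneg _) (mul_nonneg hμ (l1_nonneg f))

lemma sqrtLassoObjective_sqrtIstaStep_add_le [CompleteSpace F] {τ μ : ℝ} (hτ : 0 < τ)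
    (hμ : 0 ≤ μ) (A : EuclideanSpace ℝ (Fin d) →L[ℝ] F) (g : F) (q : EuclideanSpace ℝ (Fin d))
    (hres : 0 < ‖A q - g‖) :
    sqrtLassoObjective A g μ (sqrtIstaStep τ μ A g q) +
        (2 - τ * ‖A‖ ^ 2) / (2 * τ * ‖A q - g‖) * ‖sqrtIstaStep τ μ A g q - q‖ ^ 2 ≤
      sqrtLassoObjective A g μ q := by
  set s := ‖A q - g‖
  set w := ContinuousLinearMap.adjoint A (g - A q)
  set p := sqrtIstaStep τ μ A g q
  have hprox := softThVec_three_point (t := 2 * τ * μ * s) (by positivity) (q + τ • w) q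
  change ‖p - _‖ ^ 2 / 2 + _ * l1 p + ‖q - p‖ ^ 2 / 2 ≤ _ at hprox
  have hfwd : ‖p - (q + τ • w)‖ ^ 2 = ‖p - q‖ ^ 2 - 2 * (τ * ⟪p - q, w⟫) + τ ^ 2 * ‖w‖ ^ 2 := by
    rw [← sub_sub, norm_sub_sq_real, real_inner_smul_right, norm_smul, Real.norm_of_nonneg hτ.le,
      mul_pow]
  have hback : ‖q - (q + τ • w)‖ ^ 2 = τ ^ 2 * ‖w‖ ^ 2 := by
    rw [sub_add_cancel_left, norm_neg, norm_smul, Real.norm_of_nonneg hτ.le, mul_pow]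
  rw [hfwd, hback, norm_sub_rev q p, inner_sub_adjoint_residual] at hprox
  have hop : ‖A (p - q)‖ ^ 2 ≤ ‖A‖ ^ 2 * ‖p - q‖ ^ 2 := by
    rw [← mul_pow]; exact pow_le_pow_left₀ (norm_nonneg _) (A.le_opNorm _) 2
  -- the prox inequality controls `‖A p - g‖²`; AM-GM trades it for `‖A p - g‖` itself
  have hamgm : 2 * s * ‖A p - g‖ ≤ ‖A p - g‖ ^ 2 + s ^ 2 := by
    nlinarith [sq_nonneg (‖A p - g‖ - s)]
  have hpoly : 2 * τ * s * sqrtLassoObjective A g μ p + (2 - τ * ‖A‖ ^ 2) * ‖p - q‖ ^ 2 ≤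
      2 * τ * s * sqrtLassoObjective A g μ q := by
    unfold sqrtLassoObjective
    linarith [mul_le_mul_of_nonneg_left hop hτ.le, mul_le_mul_of_nonneg_left hamgm hτ.le]
  have hpos : 0 < 2 * τ * s := by positivity
  rw [div_mul_eq_mul_div, ← le_sub_iff_add_le', div_le_iff₀ hpos]
  linarith

end

theorem sqrt_ista_asymptotic_regularity {d m : ℕ} (τ μ : ℝ) (hμ : 0 < μ)
    (A : EuclideanSpace ℝ (Fin d) →L[ℝ] EuclideanSpace ℝ (Fin m))
    (g : EuclideanSpace ℝ (Fin m)) (hτ : 0 < τ) (hτ2 : τ < 2 / ‖A‖ ^ 2)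
    (f : ℕ → EuclideanSpace ℝ (Fin d)) (σ : ℕ → ℝ)
    (hσ : ∀ k, σ k = ‖A (f k) - g‖) (hσpos : ∀ k, 0 < σ k)
    (σmax : ℝ) (hσmax : ∀ k, σ k ≤ σmax)
    (hiter : ∀ k, f (k + 1) =
      softThVec (2 * τ * μ * σ k) (f k + τ • (ContinuousLinearMap.adjoint A) (g - A (f k)))) :
    Summable (fun k => ‖f (k + 1) - f k‖ ^ 2) ∧
      Tendsto (fun k => ‖f (k + 1) - f k‖) atTop (𝓝 0) ∧
      Tendsto (fun k => |σ (k + 1) - σ k|) atTop (𝓝 0) := by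
  have hgap : 0 < 2 - τ * ‖A‖ ^ 2 := by
    rcases (sq_nonneg ‖A‖).eq_or_lt with hA | hA
    · rw [← hA]; norm_num
    · linarith [(lt_div_iff₀ hA).mp hτ2]
  have hσmax_pos : 0 < σmax := (hσpos 0).trans_le (hσmax 0)
  set c := (2 - τ * ‖A‖ ^ 2) / (2 * τ * σmax)
  have hdecrease : ∀ k, c * ‖f (k + 1) - f k‖ ^ 2 ≤
      sqrtLassoObjective A g μ (f k) - sqrtLassoObjective A g μ (f (k + 1)) := by
    intro k
    have hnext : f (k + 1) = sqrtIstaStep τ μ A g (f k) := by rw [hiter k, hσ k]; rfl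
    have hdesc := sqrtLassoObjective_sqrtIstaStep_add_le hτ hμ.le A g (f k) (hσ k ▸ hσpos k)
    rw [← hnext, ← hσ k] at hdesc
    have hc : c ≤ (2 - τ * ‖A‖ ^ 2) / (2 * τ * σ k) :=
      div_le_div_of_nonneg_left hgap.le (by have := hσpos k; positivity)
        (by gcongr; exact hσmax k)
    linarith [mul_le_mul_of_nonneg_right hc (sq_nonneg ‖f (k + 1) - f k‖)]
  have hsum : Summable fun k => ‖f (k + 1) - f k‖ ^ 2 :=
    (summable_mul_left_iff (by positivity : c ≠ 0)).mp <| summable_of_le_sub_succ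
      (fun k => by positivity) (fun k => sqrtLassoObjective_nonneg hμ.le A g (f k)) hdecrease
  have hnorm := tendsto_norm_zero_of_summable_norm_sq hsum
  refine ⟨hsum, hnorm, squeeze_zero (fun k => abs_nonneg _) (fun k => ?_)
    (by simpa using hnorm.const_mul ‖A‖)⟩
  rw [hσ, hσ]
  exact abs_norm_residual_sub_le A g _ _
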